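/- arXiv:1903.06368 — 2 statements merged into one kernel-verified Lean document; each statement's English description precedes it below -/
import Mathlib

section
/- (Gronwall-type sampled-data deviation bound.) Let f : ℝⁿ × ℝᵐ → ℝⁿ be Lipschitz with constant L > 0 in both arguments (separately) and bounded by M ≥ 0 on the relevant domain. Fix τ > 0, a constant control u, a nominal point q ∈ ℝⁿ and a control a ∈ ℝᵐ with ‖u − a‖ ≤ μ/2. Suppose x : [0,τ] → ℝⁿ is absolutely continuous with ‖x(0) − q‖ ≤ η/2 and ‖x'(t) − f(x(t), u)‖ ≤ δ for a.e. t ∈ [0,τ]. Then ‖x(τ) − (q + τ·f(q, a))‖ ≤ (η/2)·e^{Lτ} + (δ/L + μ/2)·(e^{Lτ} − 1) + M·(e^{Lτ} − Lτ − 1)/L. -/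
open Real

/-- Gronwall-type sampled-data deviation bound (Theorem 1, key estimate). -/
theorem gronwall_sampled_data_bound {n m : ℕ}
    (f : EuclideanSpace ℝ (Fin n) → EuclideanSpace ℝ (Fin m) → EuclideanSpace ℝ (Fin n))
    (L M δ μ η τ : ℝ) (hL : 0 < L) (hM : 0 ≤ M) (hδ : 0 ≤ δ) (hτ : 0 < τ)
    (hLipx : ∀ a b u, ‖f a u - f b u‖ ≤ L * ‖a - b‖)
    (hLipu : ∀ a u v, ‖f a u - f a v‖ ≤ L * ‖u - v‖)
    (hbound : ∀ a u, ‖f a u‖ ≤ M)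
    (u a : EuclideanSpace ℝ (Fin m)) (hua : ‖u - a‖ ≤ μ / 2)
    (q : EuclideanSpace ℝ (Fin n))
    (x x' : ℝ → EuclideanSpace ℝ (Fin n))
    (hderiv : ∀ t ∈ Set.Icc (0 : ℝ) τ, HasDerivAt x (x' t) t)
    (hx0 : ‖x 0 - q‖ ≤ η / 2)
    (hpert : ∀ t ∈ Set.Icc (0 : ℝ) τ, ‖x' t - f (x t) u‖ ≤ δ) :
    ‖x τ - (q + τ • f q a)‖ ≤
      (η / 2) * exp (L * τ) + (δ / L + μ / 2) * (exp (L * τ) - 1) +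
        M * (exp (L * τ) - L * τ - 1) / L := by
  have hL0 : L ≠ 0 := hL.ne'
  set P : ℝ := η / 2 + (δ / L + μ / 2) + M / L with hP
  set R : ℝ := δ / L + μ / 2 + M / L with hR
  set y : ℝ → EuclideanSpace ℝ (Fin n) := fun t => x t - q - t • f q a with hy
  set y' : ℝ → EuclideanSpace ℝ (Fin n) := fun t => x' t - f q a with hy'
  have hderivy : ∀ t ∈ Set.Icc (0 : ℝ) τ, HasDerivAt y (y' t) t := by
    intro t ht
    have h1 : HasDerivAt (fun s : ℝ => s • f q a) ((1 : ℝ) • f q a) t :=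
      (hasDerivAt_id t).smul_const (f q a)
    have h2 := ((hderiv t ht).sub_const q).sub h1
    simp only [one_smul] at h2
    exact h2
  have hconty : ContinuousOn y (Set.Icc 0 τ) := fun t ht =>
    ((hderivy t ht).continuousAt).continuousWithinAt
  -- key differential inequality
  have hkey : ∀ t ∈ Set.Icc (0 : ℝ) τ,
      ‖y' t‖ ≤ L * ‖y t‖ + L * M * t + (L * (μ / 2) + δ) := by
    intro t ht
    have ht0 : 0 ≤ t := ht.1
    have e1 : ‖x' t - f (x t) u‖ ≤ δ := hpert t ht
    have e2 : ‖f (x t) u - f (x t) a‖ ≤ L * (μ / 2) :=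
      (hLipu (x t) u a).trans (mul_le_mul_of_nonneg_left hua hL.le)
    have e3 : ‖f (x t) a - f q a‖ ≤ L * ‖x t - q‖ := hLipx (x t) q a
    have e4 : ‖x t - q‖ ≤ ‖y t‖ + t * M := by
      have : x t - q = y t + t • f q a := by simp [hy]
      rw [this]
      refine (norm_add_le _ _).trans ?_
      have : ‖t • f q a‖ ≤ t * M := by
        rw [norm_smul, Real.norm_eq_abs, abs_of_nonneg ht0]
        exact mul_le_mul_of_nonneg_left (hbound q a) ht0
      linarith
    have hsplit : y' t = (x' t - f (x t) u) + (f (x t) u - f (x t) a) + (f (x t) a - f q a) := by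
      simp [hy']
    have e5 : ‖y' t‖ ≤ δ + L * (μ / 2) + L * ‖x t - q‖ := by
      rw [hsplit]
      refine (norm_add₃_le).trans ?_
      linarith
    nlinarith [mul_le_mul_of_nonneg_left e4 hL.le]
  -- for every ε > 0, the fencing bound holds
  have hmain : ∀ ε : ℝ, 0 < ε →
      ‖y τ‖ ≤ (P + ε * (1 + τ)) * exp (L * τ) - M * τ - R := by
    intro ε hε
    set B : ℝ → ℝ := fun t => (P + ε * (1 + t)) * exp (L * t) - M * t - R with hB
    set B' : ℝ → ℝ := fun t =>
      ε * exp (L * t) + (P + ε * (1 + t)) * (L * exp (L * t)) - M with hB'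
    have hexp : ∀ t : ℝ, HasDerivAt (fun s => exp (L * s)) (L * exp (L * t)) t := by
      intro t
      have := (Real.hasDerivAt_exp (L * t)).comp t ((hasDerivAt_id t).const_mul L)
      simpa [mul_comm, Function.comp_def] using this
    have hBderiv : ∀ t : ℝ, HasDerivAt B (B' t) t := by
      intro t
      have h1 : HasDerivAt (fun s : ℝ => P + ε * (1 + s)) ε t := by
        simpa using (((hasDerivAt_id t).const_add (1 : ℝ)).const_mul ε).const_add P
      have h2 := (h1.mul (hexp t)).sub ((hasDerivAt_id t).const_mul M)
      have h3 := h2.sub_const R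
      simpa [hB, hB', mul_comm, sub_sub] using h3
    have hB0 : ‖y 0‖ ≤ B 0 := by
      have : B 0 = η / 2 + ε := by
        simp only [hB, hP, hR]
        rw [mul_zero, Real.exp_zero]
        field_simp
        ring
      rw [this]
      have : ‖y 0‖ = ‖x 0 - q‖ := by simp [hy]
      rw [this]; linarith
    have hfin := image_norm_le_of_norm_deriv_right_lt_deriv_boundary hconty
      (fun t htt => (hderivy t (Set.mem_Icc_of_Ico htt)).hasDerivWithinAt)
      hB0 hBderiv ?_ (Set.right_mem_Icc.2 hτ.le)
    · exact hfin
    · intro t htt heq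
      have ht : t ∈ Set.Icc (0 : ℝ) τ := Set.mem_Icc_of_Ico htt
      have h1 := hkey t ht
      rw [heq] at h1
      have hpos : 0 < ε * exp (L * t) := mul_pos hε (Real.exp_pos _)
      refine h1.trans_lt ?_
      have hLR : L * R = δ + L * (μ / 2) + M := by
        simp only [hR]; field_simp
      simp only [hB, hB']
      nlinarith [Real.exp_pos (L * t)]
  -- pass to the limit ε → 0
  have hyτ : ‖y τ‖ ≤ P * exp (L * τ) - M * τ - R := by
    refine le_of_forall_pos_le_add fun ε hε => ?_
    have hden : 0 < (1 + τ) * exp (L * τ) := by positivity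
    have := hmain (ε / ((1 + τ) * exp (L * τ))) (by positivity)
    calc ‖y τ‖ ≤ (P + ε / ((1 + τ) * exp (L * τ)) * (1 + τ)) * exp (L * τ) - M * τ - R := this
      _ = P * exp (L * τ) - M * τ - R + ε := by field_simp; ring
  have hgoal : ‖x τ - (q + τ • f q a)‖ = ‖y τ‖ := by
    simp [hy, sub_sub]
  rw [hgoal]
  refine hyτ.trans_eq ?_
  simp only [hP, hR]
  field_simp
  ring
end

section
/- (Containment of one-step reach sets under perturbation inflation.) Let f be L-Lipschitz in the state, τ > 0, 0 ≤ δ₁, and suppose x : [0,τ] → ℝⁿ satisfies ‖x'(s) − f(x(s),u)‖ ≤ δ₁ a.e. with x(0) = x₀. If y' ∈ ℝⁿ satisfies ‖y' − x(τ)‖ ≤ ρ and (L + 1/τ)·ρ + δ₁ ≤ δ₂, then there exists an absolutely continuous z : [0,τ] → ℝⁿ with z(0) = x₀, z(τ) = y', and ‖z'(s) − f(z(s),u)‖ ≤ δ₂ a.e. on [0,τ]. -/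
/-- Containment of one-step reach sets under perturbation inflation. -/
theorem reach_set_inflation {n m : ℕ}
    (f : EuclideanSpace ℝ (Fin n) → EuclideanSpace ℝ (Fin m) → EuclideanSpace ℝ (Fin n))
    (L τ δ₁ δ₂ ρ : ℝ) (hL : 0 < L) (hτ : 0 < τ) (hδ₁ : 0 ≤ δ₁) (hρ : 0 ≤ ρ)
    (hLipx : ∀ a b u, ‖f a u - f b u‖ ≤ L * ‖a - b‖)
    (u : EuclideanSpace ℝ (Fin m))
    (x₀ : EuclideanSpace ℝ (Fin n)) (x x' : ℝ → EuclideanSpace ℝ (Fin n))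
    (hx0 : x 0 = x₀)
    (hderiv : ∀ s ∈ Set.Icc (0 : ℝ) τ, HasDerivAt x (x' s) s)
    (hpert : ∀ s ∈ Set.Icc (0 : ℝ) τ, ‖x' s - f (x s) u‖ ≤ δ₁)
    (y' : EuclideanSpace ℝ (Fin n)) (hy : ‖y' - x τ‖ ≤ ρ)
    (hmargin : (L + 1 / τ) * ρ + δ₁ ≤ δ₂) :
    ∃ z z' : ℝ → EuclideanSpace ℝ (Fin n),
      z 0 = x₀ ∧ z τ = y' ∧
      ∀ s ∈ Set.Icc (0 : ℝ) τ,
        HasDerivAt z (z' s) s ∧ ‖z' s - f (z s) u‖ ≤ δ₂ := by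
  refine ⟨fun s => x s + (s / τ) • (y' - x τ),
    fun s => x' s + (1 / τ) • (y' - x τ), by simp [hx0], by
      field_simp; rw [one_smul]; abel, fun s hs => ?_⟩
  obtain ⟨hs0, hsτ⟩ := hs
  constructor
  · have h1 : HasDerivAt (fun s : ℝ => (s / τ) • (y' - x τ)) ((1 / τ) • (y' - x τ)) s := by
      have : HasDerivAt (fun s : ℝ => s / τ) (1 / τ) s := (hasDerivAt_id s).div_const τ
      simpa using this.smul_const (y' - x τ)
    exact (hderiv s ⟨hs0, hsτ⟩).add h1
  · have key : x' s + (1 / τ) • (y' - x τ) - f (x s + (s / τ) • (y' - x τ)) u =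
        (x' s - f (x s) u) + (f (x s) u - f (x s + (s / τ) • (y' - x τ)) u)
          + (1 / τ) • (y' - x τ) := by abel
    rw [key]
    have hb1 := hpert s ⟨hs0, hsτ⟩
    have hb2 : ‖f (x s) u - f (x s + (s / τ) • (y' - x τ)) u‖ ≤ L * ρ := by
      refine (hLipx _ _ u).trans ?_
      have : ‖x s - (x s + (s / τ) • (y' - x τ))‖ = (s / τ) * ‖y' - x τ‖ := by
        rw [show x s - (x s + (s / τ) • (y' - x τ)) = -((s / τ) • (y' - x τ)) by abel,
          norm_neg, norm_smul, Real.norm_eq_abs, abs_of_nonneg (by positivity)]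
      rw [this]
      have hsτ1 : s / τ ≤ 1 := (div_le_one hτ).2 hsτ
      have h4 : s / τ * ‖y' - x τ‖ ≤ ρ :=
        (mul_le_mul hsτ1 hy (norm_nonneg _) one_pos.le).trans_eq (one_mul ρ)
      exact mul_le_mul_of_nonneg_left h4 hL.le
    have hb3 : ‖(1 / τ) • (y' - x τ)‖ ≤ (1 / τ) * ρ := by
      rw [norm_smul, Real.norm_eq_abs, abs_of_nonneg (by positivity)]
      exact mul_le_mul_of_nonneg_left hy (by positivity)
    calc ‖(x' s - f (x s) u) + (f (x s) u - f (x s + (s / τ) • (y' - x τ)) u)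
          + (1 / τ) • (y' - x τ)‖
        ≤ ‖x' s - f (x s) u‖ + ‖f (x s) u - f (x s + (s / τ) • (y' - x τ)) u‖
          + ‖(1 / τ) • (y' - x τ)‖ := norm_add₃_le
      _ ≤ δ₁ + L * ρ + (1 / τ) * ρ := by linarith
      _ ≤ δ₂ := by nlinarith
end
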